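/- Let X be a topological vector space over ℂ, T a continuous linear operator on X, and r ≥ 1 an integer. Then T is a syndetic operator if and only if the direct sum operator T ⊕ T² ⊕ … ⊕ T^r on X^r, defined by (x₁, …, x_r) ↦ (T x₁, T² x₂, …, T^r x_r), is a syndetic operator on X^r (with the product topology). -/

import Mathlib

open Filter Set

/-- `A ⊆ ℕ` is syndetic: some `M` such that every interval of `M` consecutive
natural numbers meets `A`. -/
def Syndetic (A : Set ℕ) : Prop :=
  ∃ M : ℕ, ∀ n : ℕ, ∃ k, n ≤ k ∧ k < n + M ∧ k ∈ A

/-- `S` is a syndetic operator: every return set `N(U,V)` between nonempty open sets is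
syndetic. -/
def SyndeticOperator {Y : Type*} [AddCommGroup Y] [Module ℂ Y] [TopologicalSpace Y]
    [IsTopologicalAddGroup Y] [ContinuousSMul ℂ Y] (S : Y →L[ℂ] Y) : Prop :=
  ∀ U V : Set Y, IsOpen U → IsOpen V → U.Nonempty → V.Nonempty →
    Syndetic {n : ℕ | ((S ^ n) '' U ∩ V).Nonempty}

/-- The direct sum operator `T ⊕ T² ⊕ ⋯ ⊕ T^r` on `X^r`,
`(x₁, …, x_r) ↦ (T x₁, T² x₂, …, T^r x_r)`. -/
noncomputable def directSumPowers {X : Type*} [AddCommGroup X] [Module ℂ X]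
    [TopologicalSpace X] [IsTopologicalAddGroup X] [ContinuousSMul ℂ X]
    (T : X →L[ℂ] X) (r : ℕ) : (Fin r → X) →L[ℂ] (Fin r → X) :=
  ContinuousLinearMap.pi (fun i => (T ^ ((i : ℕ) + 1)).comp (ContinuousLinearMap.proj i))

/-! ### Auxiliary combinatorics of syndetic and thickly syndetic sets -/

lemma Syndetic.mono {A B : Set ℕ} (hAB : A ⊆ B) (h : Syndetic A) : Syndetic B := by
  obtain ⟨M, hM⟩ := h
  refine ⟨M, fun n => ?_⟩
  obtain ⟨k, h1, h2, h3⟩ := hM n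
  exact ⟨k, h1, h2, hAB h3⟩

lemma Syndetic.shift {A : Set ℕ} (h : Syndetic A) (k : ℕ) : Syndetic {n | n + k ∈ A} := by
  obtain ⟨M, hM⟩ := h
  refine ⟨M, fun n => ?_⟩
  obtain ⟨m, h1, h2, h3⟩ := hM (n + k)
  refine ⟨m - k, by omega, by omega, ?_⟩
  have he : m - k + k = m := by omega
  show m - k + k ∈ A
  rwa [he]

/-- `A` is thickly syndetic: for every `k`, the set of starting points of length-`k`
intervals inside `A` is syndetic. -/
def ThickSyn (A : Set ℕ) : Prop := ∀ k : ℕ, Syndetic {n | ∀ j ≤ k, n + j ∈ A}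

lemma ThickSyn.mono {A B : Set ℕ} (hAB : A ⊆ B) (h : ThickSyn A) : ThickSyn B := by
  intro k
  refine (h k).mono ?_
  intro n hn j hj
  exact hAB (hn j hj)

lemma ThickSyn.syndetic {A : Set ℕ} (h : ThickSyn A) : Syndetic A := by
  refine (h 0).mono ?_
  intro n hn
  simpa using hn 0 le_rfl

lemma ThickSyn.inter {A B : Set ℕ} (hA : ThickSyn A) (hB : ThickSyn B) :
    ThickSyn (A ∩ B) := by
  intro k
  obtain ⟨MB, hMB⟩ := hB k
  obtain ⟨MA, hMA⟩ := hA (k + MB)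
  refine ⟨MA + MB, fun n => ?_⟩
  obtain ⟨m, hm1, hm2, hm3⟩ := hMA n
  obtain ⟨m', hm'1, hm'2, hm'3⟩ := hMB m
  refine ⟨m', by omega, by omega, fun j hj => ?_⟩
  refine ⟨?_, hm'3 j hj⟩
  have h5 := hm3 (m' - m + j) (by omega)
  have he : m + (m' - m + j) = m' + j := by omega
  rwa [he] at h5

lemma ThickSyn.univ : ThickSyn (Set.univ : Set ℕ) := by
  intro k
  exact ⟨1, fun n => ⟨n, le_rfl, by omega, fun j hj => Set.mem_univ _⟩⟩

lemma ThickSyn.dilate {A : Set ℕ} (p : ℕ) (hp : 1 ≤ p) (h : ThickSyn A) :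
    ThickSyn {n | p * n ∈ A} := by
  intro k
  obtain ⟨M, hM⟩ := h (p * k + p)
  refine ⟨M + p + 1, fun n => ?_⟩
  obtain ⟨a, ha1, ha2, ha3⟩ := hM (p * n)
  obtain ⟨q, hq1, hq2⟩ : ∃ q, a ≤ p * q ∧ p * q ≤ a + p - 1 := by
    have h1 := Nat.div_add_mod (a + p - 1) p
    have h2 : (a + p - 1) % p < p := Nat.mod_lt _ (by omega)
    refine ⟨(a + p - 1) / p, ?_, ?_⟩
    · omega
    · omega
  have hnq : n ≤ q := Nat.le_of_mul_le_mul_left (show p * n ≤ p * q by omega) (by omega)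
  have hqlt : q < n + (M + p + 1) := by
    have h6 : M + p + 1 ≤ p * (M + p + 1) := Nat.le_mul_of_pos_left _ (by omega)
    have h7 : p * q < p * (n + (M + p + 1)) := by
      have he : p * (n + (M + p + 1)) = p * n + p * (M + p + 1) := by ring
      omega
    exact Nat.lt_of_mul_lt_mul_left h7
  refine ⟨q, hnq, hqlt, fun j hj => ?_⟩
  have hjk : p * j ≤ p * k := Nat.mul_le_mul le_rfl hj
  have key := ha3 (p * q + p * j - a) (by omega)
  have e1 : a + (p * q + p * j - a) = p * (q + j) := by
    have he : p * (q + j) = p * q + p * j := by ring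
    omega
  rw [e1] at key
  exact key

lemma thickSyn_biInter {ι : Type*} (s : Finset ι) (f : ι → Set ℕ)
    (h : ∀ i ∈ s, ThickSyn (f i)) : ThickSyn (⋂ i ∈ s, f i) := by
  classical
  induction s using Finset.induction_on with
  | empty => simpa using ThickSyn.univ
  | @insert a s ha ih =>
      rw [Finset.set_biInter_insert]
      exact (h a (Finset.mem_insert_self _ _)).inter
        (ih fun i hi => h i (Finset.mem_insert_of_mem hi))

/-! ### Operator lemmas -/

section Operator

variable {X : Type*} [AddCommGroup X] [Module ℂ X] [TopologicalSpace X]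
    [IsTopologicalAddGroup X] [ContinuousSMul ℂ X]

/-- Return sets into a 0-neighborhood are thickly syndetic. -/
lemma thickSyn_target_zero (T : X →L[ℂ] X) (hT : SyndeticOperator T) {U W : Set X}
    (hUo : IsOpen U) (hUne : U.Nonempty) (hWo : IsOpen W) (hW0 : (0 : X) ∈ W) :
    ThickSyn {m : ℕ | ((T ^ m) '' U ∩ W).Nonempty} := by
  intro k
  set W' : Set X := ⋂ j ∈ Finset.range (k + 1), (⇑(T ^ j)) ⁻¹' W with hW'
  have hW'o : IsOpen W' :=
    isOpen_biInter_finset (fun j _ => hWo.preimage (T ^ j).continuous)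
  have hW'0 : (0 : X) ∈ W' := by
    rw [hW']
    refine Set.mem_iInter₂.mpr (fun j _ => ?_)
    show (T ^ j) 0 ∈ W
    simpa using hW0
  have hs := hT U W' hUo hW'o hUne ⟨0, hW'0⟩
  refine hs.mono ?_
  intro n hn j hj
  obtain ⟨y, ⟨u, huU, rfl⟩, hyW'⟩ := hn
  refine ⟨(T ^ (n + j)) u, ⟨u, huU, rfl⟩, ?_⟩
  have he : (T ^ (n + j)) u = (T ^ j) ((T ^ n) u) := by
    rw [show n + j = j + n by omega, pow_add, ContinuousLinearMap.mul_apply]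
  rw [he]
  have hmem := Set.mem_iInter₂.mp (hW' ▸ hyW') j (Finset.mem_range.mpr (by omega))
  exact hmem

/-- Return sets out of a 0-neighborhood are thickly syndetic. -/
lemma thickSyn_source_zero (T : X →L[ℂ] X) (hT : SyndeticOperator T) {W V : Set X}
    (hWo : IsOpen W) (hW0 : (0 : X) ∈ W) (hVo : IsOpen V) (hVne : V.Nonempty) :
    ThickSyn {m : ℕ | ((T ^ m) '' W ∩ V).Nonempty} := by
  intro k
  set W' : Set X := ⋂ j ∈ Finset.range (k + 1), (⇑(T ^ j)) ⁻¹' W with hW'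
  have hW'o : IsOpen W' :=
    isOpen_biInter_finset (fun j _ => hWo.preimage (T ^ j).continuous)
  have hW'0 : (0 : X) ∈ W' := by
    rw [hW']
    refine Set.mem_iInter₂.mpr (fun j _ => ?_)
    show (T ^ j) 0 ∈ W
    simpa using hW0
  have hs := (hT W' V hW'o hVo ⟨0, hW'0⟩ hVne).shift k
  refine hs.mono ?_
  intro n hn j hj
  obtain ⟨y, ⟨x, hxW', rfl⟩, hyV⟩ := hn
  refine ⟨(T ^ (n + j)) ((T ^ (k - j)) x), ⟨(T ^ (k - j)) x, ?_, rfl⟩, ?_⟩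
  · exact Set.mem_iInter₂.mp (hW' ▸ hxW') (k - j) (Finset.mem_range.mpr (by omega))
  · have he : (T ^ (n + j)) ((T ^ (k - j)) x) = (T ^ (n + k)) x := by
      rw [← ContinuousLinearMap.mul_apply, ← pow_add]
      congr 2
      omega
    rw [he]
    exact hyV

/-- Shrinking an open set: find `U'` and a 0-neighborhood `W` with `U' + W ⊆ U`. -/
lemma exists_shrink {U : Set X} (hUo : IsOpen U) (hUne : U.Nonempty) :
    ∃ U' W : Set X, IsOpen U' ∧ U'.Nonempty ∧ IsOpen W ∧ (0 : X) ∈ W ∧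
      ∀ u ∈ U', ∀ w ∈ W, u + w ∈ U := by
  obtain ⟨u₀, hu₀⟩ := hUne
  have hcont : Continuous (fun p : X × X => u₀ + p.1 + p.2) := by continuity
  have hopen : IsOpen ((fun p : X × X => u₀ + p.1 + p.2) ⁻¹' U) := hUo.preimage hcont
  have hmem : ((0 : X), (0 : X)) ∈ (fun p : X × X => u₀ + p.1 + p.2) ⁻¹' U := by
    simpa using hu₀
  obtain ⟨W₁, W₂, hW₁o, hW₂o, h01, h02, hsub⟩ := isOpen_prod_iff.mp hopen 0 0 hmem
  refine ⟨(fun x : X => x - u₀) ⁻¹' (W₁ ∩ W₂), W₁ ∩ W₂,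
    (hW₁o.inter hW₂o).preimage (continuous_id.sub continuous_const),
    ⟨u₀, by simp [h01, h02]⟩, hW₁o.inter hW₂o, ⟨h01, h02⟩, ?_⟩
  intro u hu w hw
  have hp : (u - u₀, w) ∈ W₁ ×ˢ W₂ := ⟨hu.1, hw.2⟩
  have h2 : u₀ + (u - u₀) + w ∈ U := hsub hp
  have he : u₀ + (u - u₀) + w = u + w := by abel
  rwa [he] at h2

/-- Every return set between nonempty open sets contains a thickly syndetic set. -/
lemma exists_thickSyn_subset (T : X →L[ℂ] X) (hT : SyndeticOperator T) {U V : Set X}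
    (hUo : IsOpen U) (hUne : U.Nonempty) (hVo : IsOpen V) (hVne : V.Nonempty) :
    ∃ C : Set ℕ, ThickSyn C ∧ C ⊆ {m : ℕ | ((T ^ m) '' U ∩ V).Nonempty} := by
  obtain ⟨U', WU, hU'o, hU'ne, hWUo, hWU0, hUsum⟩ := exists_shrink hUo hUne
  obtain ⟨V', WV, hV'o, hV'ne, hWVo, hWV0, hVsum⟩ := exists_shrink hVo hVne
  have hWo : IsOpen (WU ∩ WV) := hWUo.inter hWVo
  have hW0 : (0 : X) ∈ WU ∩ WV := ⟨hWU0, hWV0⟩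
  have hA := thickSyn_target_zero T hT hU'o hU'ne hWo hW0
  have hB := thickSyn_source_zero T hT hWo hW0 hV'o hV'ne
  refine ⟨_ ∩ _, hA.inter hB, ?_⟩
  rintro n ⟨⟨y, ⟨u, huU', rfl⟩, hyW⟩, ⟨z, ⟨w, hwW, rfl⟩, hzV'⟩⟩
  refine ⟨(T ^ n) (u + w), ⟨u + w, hUsum u huU' w hwW.1, rfl⟩, ?_⟩
  have he : (T ^ n) (u + w) = (T ^ n) w + (T ^ n) u := by
    rw [map_add, add_comm]
  rw [he]
  exact hVsum _ hzV' _ hyW.2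

lemma directSumPowers_pow_apply (T : X →L[ℂ] X) (r : ℕ) :
    ∀ (n : ℕ) (x : Fin r → X) (i : Fin r),
      ((directSumPowers T r ^ n) x) i = (T ^ (((i : ℕ) + 1) * n)) (x i) := by
  intro n
  induction n with
  | zero => intro x i; simp
  | succ n ih =>
      intro x i
      rw [pow_succ, ContinuousLinearMap.mul_apply, ih (directSumPowers T r x) i]
      have h2 : (directSumPowers T r) x i = (T ^ ((i : ℕ) + 1)) (x i) := by
        simp [directSumPowers]
      rw [h2, ← ContinuousLinearMap.mul_apply, ← pow_add, Nat.mul_succ]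

lemma exists_box {r : ℕ} {U : Set (Fin r → X)} (hUo : IsOpen U) (hUne : U.Nonempty) :
    ∃ u : Fin r → Set X, (∀ i, IsOpen (u i)) ∧ (∀ i, (u i).Nonempty) ∧
      Set.pi Set.univ u ⊆ U := by
  classical
  obtain ⟨f, hf⟩ := hUne
  obtain ⟨I, u, hIu, hsub⟩ := isOpen_pi_iff.mp hUo f hf
  refine ⟨fun i => if i ∈ I then u i else Set.univ, ?_, ?_, ?_⟩
  · intro i
    by_cases hi : i ∈ I
    · simpa [hi] using (hIu i hi).1
    · simp [hi]
  · intro i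
    by_cases hi : i ∈ I
    · exact ⟨f i, by simpa [hi] using (hIu i hi).2⟩
    · exact ⟨f i, by simp [hi]⟩
  · intro x hx
    apply hsub
    rw [Set.mem_pi]
    intro i hi
    have h2 := Set.mem_univ_pi.mp hx i
    rw [if_pos (Finset.mem_coe.mp hi)] at h2
    exact h2

end Operator

/-- `T` is a syndetic operator iff `T ⊕ T² ⊕ ⋯ ⊕ T^r` is a syndetic operator on `X^r`. -/
theorem SyndeticOperator_iff_directSum
    {X : Type*} [AddCommGroup X] [Module ℂ X] [TopologicalSpace X]
    [IsTopologicalAddGroup X] [ContinuousSMul ℂ X]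
    (T : X →L[ℂ] X) (r : ℕ) (hr : 1 ≤ r) :
    SyndeticOperator T ↔ SyndeticOperator (directSumPowers T r) := by
  constructor
  · intro hT U V hUo hVo hUne hVne
    obtain ⟨u, huo, hune, husub⟩ := exists_box hUo hUne
    obtain ⟨v, hvo, hvne, hvsub⟩ := exists_box hVo hVne
    have hC : ∀ i : Fin r, ∃ C : Set ℕ, ThickSyn C ∧
        C ⊆ {m : ℕ | ((T ^ m) '' (u i) ∩ (v i)).Nonempty} :=
      fun i => exists_thickSyn_subset T hT (huo i) (hune i) (hvo i) (hvne i)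
    choose C hCts hCsub using hC
    have hTSall : ∀ i : Fin r, ThickSyn {n : ℕ | ((i : ℕ) + 1) * n ∈ C i} :=
      fun i => (hCts i).dilate _ (by omega)
    have hbig : ThickSyn (⋂ i ∈ (Finset.univ : Finset (Fin r)),
        {n : ℕ | ((i : ℕ) + 1) * n ∈ C i}) :=
      thickSyn_biInter _ _ (fun i _ => hTSall i)
    refine hbig.syndetic.mono ?_
    intro n hn
    have hn' : ∀ i : Fin r, ((i : ℕ) + 1) * n ∈ C i :=
      fun i => Set.mem_iInter₂.mp hn i (Finset.mem_univ i)
    have hw : ∀ i : Fin r, ∃ y ∈ u i, (T ^ (((i : ℕ) + 1) * n)) y ∈ v i := by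
      intro i
      obtain ⟨z, ⟨y, hy, rfl⟩, hz⟩ := hCsub i (hn' i)
      exact ⟨y, hy, hz⟩
    choose y hyu hyv using hw
    refine ⟨(directSumPowers T r ^ n) y, ⟨y, ?_, rfl⟩, ?_⟩
    · exact husub (Set.mem_univ_pi.mpr hyu)
    · apply hvsub
      rw [Set.mem_univ_pi]
      intro i
      rw [directSumPowers_pow_apply]
      exact hyv i
  · intro hS U V hUo hVo hUne hVne
    set i0 : Fin r := ⟨0, hr⟩ with hi0
    have hp : Continuous (fun x : Fin r → X => x i0) := continuous_apply i0
    obtain ⟨u₀, hu₀⟩ := hUne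
    obtain ⟨v₀, hv₀⟩ := hVne
    have h1 := hS ((fun x : Fin r → X => x i0) ⁻¹' U) ((fun x : Fin r → X => x i0) ⁻¹' V)
      (hUo.preimage hp) (hVo.preimage hp) ⟨fun _ => u₀, hu₀⟩ ⟨fun _ => v₀, hv₀⟩
    refine h1.mono ?_
    rintro n ⟨z, ⟨x, hxU, rfl⟩, hzV⟩
    refine ⟨(T ^ n) (x i0), ⟨x i0, hxU, rfl⟩, ?_⟩
    have h2 : ((directSumPowers T r ^ n) x) i0 = (T ^ n) (x i0) := by
      rw [directSumPowers_pow_apply]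
      norm_num [hi0]
    rw [← h2]
    exact hzV
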